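/- Let M be a smooth manifold, F a codimension-one foliation on M, and ω a smooth closed 1-form on M whose kernel at each point is the tangent space of the leaf of F through the point. Let σ : [0,1] → M be a smooth loop contained in a single leaf L, and τ : [0,1] × [0,1] → M a smooth homotopy with τ(s,0) = σ(s), such that each path s ↦ τ(s,t) lies in a single leaf and the paths t ↦ τ(0,t) and t ↦ τ(1,t) coincide (a holonomy lift along a transversal). Then τ(s,1) is also a loop; in particular ∫ over the boundary of the square of τ*ω = 0 forces the transverse displacement to vanish whenever ω is strictly positive on a transverse vector field. -/

import Mathlib

noncomputable section

/-- Exterior derivative of a smooth 1-form on a normed space, evaluated at `x` on `(u, v)`. -/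
def extDeriv1 {E : Type*} [NormedAddCommGroup E] [NormedSpace ℝ E]
    (ω : E → E →L[ℝ] ℝ) (x u v : E) : ℝ :=
  fderiv ℝ ω x u v - fderiv ℝ ω x v u

private lemma partialFst {E : Type*} [NormedAddCommGroup E] [NormedSpace ℝ E]
    (f : ℝ × ℝ → E) (hf : Differentiable ℝ f) (s t : ℝ) :
    HasDerivAt (fun s' => f (s', t)) (fderiv ℝ f (s, t) (1, 0)) s := by
  have h1 : HasDerivAt (fun s' : ℝ => ((s', t) : ℝ × ℝ)) ((1 : ℝ), (0 : ℝ)) s :=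
    (hasDerivAt_id s).prodMk (hasDerivAt_const s t)
  exact (hf (s, t)).hasFDerivAt.comp_hasDerivAt s h1

private lemma partialSnd {E : Type*} [NormedAddCommGroup E] [NormedSpace ℝ E]
    (f : ℝ × ℝ → E) (hf : Differentiable ℝ f) (s t : ℝ) :
    HasDerivAt (fun t' => f (s, t')) (fderiv ℝ f (s, t) (0, 1)) t := by
  have h1 : HasDerivAt (fun t' : ℝ => ((s, t') : ℝ × ℝ)) ((0 : ℝ), (1 : ℝ)) t :=
    (hasDerivAt_const t s).prodMk (hasDerivAt_id t)
  exact (hf (s, t)).hasFDerivAt.comp_hasDerivAt t h1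

/-- a foliation defined by a closed 1-form has trivial holonomy. Let `ω` be a
smooth closed 1-form defining the foliation (so leafwise curves are `ω`-null), let
`τ : [0,1] × [0,1] → M` be a smooth holonomy homotopy whose horizontal paths `s ↦ τ s t` are
leafwise, whose vertical edges run along a fixed transversal `c` (on which `ω` is strictly
positive) via parameters `a, b` with `a 0 = b 0` (so `s ↦ τ s 0` is a loop in a leaf). Then
the transverse displacement vanishes: `a t = b t` for all `t`; in particular the lifted path
`s ↦ τ s 1` is again a loop. -/
theorem holonomy_trivial_of_closed_defining_form
    {E : Type*} [NormedAddCommGroup E] [NormedSpace ℝ E]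
    (ω : E → E →L[ℝ] ℝ) (hω : ContDiff ℝ (⊤ : ℕ∞) ω)
    (hclosed : ∀ x u v, extDeriv1 ω x u v = 0)
    (τ : ℝ → ℝ → E) (hτ : ContDiff ℝ (⊤ : ℕ∞) (fun p : ℝ × ℝ => τ p.1 p.2))
    (hleafwise : ∀ s t : ℝ, ω (τ s t) (deriv (fun s' => τ s' t) s) = 0)
    (c : ℝ → E) (hc : ContDiff ℝ (⊤ : ℕ∞) c)
    (htransverse : ∀ u : ℝ, 0 < ω (c u) (deriv c u))
    (a b : ℝ → ℝ) (ha : ContDiff ℝ (⊤ : ℕ∞) a) (hb : ContDiff ℝ (⊤ : ℕ∞) b)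
    (hedge0 : ∀ t : ℝ, τ 0 t = c (a t)) (hedge1 : ∀ t : ℝ, τ 1 t = c (b t))
    (hloop : a 0 = b 0) :
    (∀ t : ℝ, a t = b t) ∧ τ 0 1 = τ 1 1 := by
  set f : ℝ × ℝ → E := fun p => τ p.1 p.2 with hfdef
  have hf : ContDiff ℝ (⊤ : ℕ∞) f := hτ
  have hfd : Differentiable ℝ f := hf.differentiable (by simp)
  have hωd : Differentiable ℝ ω := hω.differentiable (by simp)
  -- the fderiv of f is smooth
  have hD : ContDiff ℝ (⊤ : ℕ∞) (fderiv ℝ f) := hf.fderiv_right (by simp)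
  have hDd : Differentiable ℝ (fderiv ℝ f) := hD.differentiable (by simp)
  -- shorthand for partial derivatives
  set u1 : ℝ × ℝ → E := fun p => fderiv ℝ f p (1, 0) with hu1def
  set u2 : ℝ × ℝ → E := fun p => fderiv ℝ f p (0, 1) with hu2def
  have hu1 : Differentiable ℝ u1 :=
    (hD.clm_apply contDiff_const).differentiable (by simp)
  have hu2 : Differentiable ℝ u2 :=
    (hD.clm_apply contDiff_const).differentiable (by simp)
  set g1 : ℝ × ℝ → (E →L[ℝ] ℝ) := fun p => ω (f p) with hg1def
  have hg1 : Differentiable ℝ g1 := hωd.comp hfd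
  -- A ≡ 0 : leafwise nullity
  have hA : ∀ p : ℝ × ℝ, g1 p (u1 p) = 0 := by
    intro p
    have hpd : deriv (fun s' => τ s' p.2) p.1 = u1 p := by
      have := (partialFst f hfd p.1 p.2).deriv
      simpa [hfdef] using this
    have := hleafwise p.1 p.2
    rw [hpd] at this
    simpa [hg1def, hfdef] using this
  -- B and its s-derivative
  set B : ℝ × ℝ → ℝ := fun p => g1 p (u2 p) with hBdef
  have hBd : Differentiable ℝ B := hg1.clm_apply hu2
  -- second derivative symmetry
  have hsymm : ∀ p : ℝ × ℝ, ∀ v w : ℝ × ℝ,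
      fderiv ℝ (fderiv ℝ f) p v w = fderiv ℝ (fderiv ℝ f) p w v := by
    intro p v w
    exact second_derivative_symmetric (fun y => (hfd y).hasFDerivAt)
      ((hDd p).hasFDerivAt) v w
  -- fderiv of u1, u2
  have hfu : ∀ (e : ℝ × ℝ) (p w : ℝ × ℝ),
      fderiv ℝ (fun q => fderiv ℝ f q e) p w = fderiv ℝ (fderiv ℝ f) p w e := by
    intro e p w
    rw [fderiv_clm_apply (hDd p) (differentiableAt_const e)]
    simp
  -- fderiv of g1
  have hfg1 : ∀ p w : ℝ × ℝ,
      fderiv ℝ g1 p w = fderiv ℝ ω (f p) (fderiv ℝ f p w) := by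
    intro p w
    have : fderiv ℝ g1 p = (fderiv ℝ ω (f p)).comp (fderiv ℝ f p) :=
      fderiv_comp p (hωd (f p)) (hfd p)
    rw [this]; rfl
  -- ∂ₛ B = 0 everywhere
  have hBs : ∀ p : ℝ × ℝ, fderiv ℝ B p (1, 0) = 0 := by
    intro p
    have h1 : fderiv ℝ B p (1, 0)
        = g1 p (fderiv ℝ u2 p (1, 0)) + fderiv ℝ g1 p (1, 0) (u2 p) := by
      rw [hBdef]
      rw [fderiv_clm_apply (hg1 p) (hu2 p)]
      simp
    have h2 : fderiv ℝ u2 p (1, 0) = fderiv ℝ (fderiv ℝ f) p (0, 1) (1, 0) := by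
      rw [hu2def, hfu (0, 1) p (1, 0), hsymm]
    -- A is identically zero, so its t-derivative vanishes
    have hAzero : (fun p : ℝ × ℝ => g1 p (u1 p)) = fun _ => (0 : ℝ) := funext hA
    have h3 : fderiv ℝ (fun p : ℝ × ℝ => g1 p (u1 p)) p (0, 1) = 0 := by
      rw [hAzero]; simp
    have h4 : fderiv ℝ (fun p : ℝ × ℝ => g1 p (u1 p)) p (0, 1)
        = g1 p (fderiv ℝ u1 p (0, 1)) + fderiv ℝ g1 p (0, 1) (u1 p) := by
      rw [fderiv_clm_apply (hg1 p) (hu1 p)]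
      simp
    have h5 : fderiv ℝ u1 p (0, 1) = fderiv ℝ (fderiv ℝ f) p (0, 1) (1, 0) := by
      rw [hu1def, hfu (1, 0) p (0, 1)]
    have hcl := hclosed (f p) (u1 p) (u2 p)
    rw [extDeriv1, sub_eq_zero] at hcl
    have hu1p : (fderiv ℝ f p) ((1 : ℝ), (0 : ℝ)) = u1 p := rfl
    have hu2p : (fderiv ℝ f p) ((0 : ℝ), (1 : ℝ)) = u2 p := rfl
    have h6 : g1 p (fderiv ℝ (fderiv ℝ f) p (0, 1) (1, 0))
        + fderiv ℝ ω (f p) (u2 p) (u1 p) = 0 := by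
      have h7 := h3
      rw [h4, h5, hfg1, hu2p] at h7
      exact h7
    rw [h1, h2, hfg1, hu1p]
    linarith [h6, hcl]
  -- hence B (0, t) = B (1, t)
  have hBconst : ∀ t : ℝ, B (0, t) = B (1, t) := by
    intro t
    have hφd : Differentiable ℝ (fun s => B (s, t)) := fun s =>
      ((partialFst (f := B) hBd s t).differentiableAt)
    have hφ' : ∀ s, deriv (fun s' => B (s', t)) s = 0 := by
      intro s
      rw [(partialFst (f := B) hBd s t).deriv]
      exact hBs (s, t)
    exact (is_const_of_deriv_eq_zero hφd hφ' 0 1)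
  -- identify B on the edges
  have hcd : Differentiable ℝ c := hc.differentiable (by simp)
  have had : Differentiable ℝ a := ha.differentiable (by simp)
  have hbd : Differentiable ℝ b := hb.differentiable (by simp)
  set g : ℝ → ℝ := fun x => ω (c x) (deriv c x) with hgdef
  have hedgeB0 : ∀ t : ℝ, B (0, t) = deriv a t * g (a t) := by
    intro t
    have h1 : HasDerivAt (fun t' => f (0, t')) (u2 (0, t)) t := partialSnd f hfd 0 t
    have h2 : (fun t' => f (0, t')) = fun t' => c (a t') := by
      funext t'; simpa [hfdef] using hedge0 t'
    have h3 : HasDerivAt (fun t' => c (a t')) (deriv a t • deriv c (a t)) t := by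
      exact HasDerivAt.scomp t (hcd (a t)).hasDerivAt (had t).hasDerivAt
    rw [h2] at h1
    have h4 : u2 (0, t) = deriv a t • deriv c (a t) := h1.unique h3
    have h5 : f (0, t) = c (a t) := by simpa [hfdef] using hedge0 t
    simp [hBdef, hg1def, h4, h5, hgdef, smul_eq_mul, mul_comm]
  have hedgeB1 : ∀ t : ℝ, B (1, t) = deriv b t * g (b t) := by
    intro t
    have h1 : HasDerivAt (fun t' => f (1, t')) (u2 (1, t)) t := partialSnd f hfd 1 t
    have h2 : (fun t' => f (1, t')) = fun t' => c (b t') := by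
      funext t'; simpa [hfdef] using hedge1 t'
    have h3 : HasDerivAt (fun t' => c (b t')) (deriv b t • deriv c (b t)) t := by
      exact HasDerivAt.scomp t (hcd (b t)).hasDerivAt (hbd t).hasDerivAt
    rw [h2] at h1
    have h4 : u2 (1, t) = deriv b t • deriv c (b t) := h1.unique h3
    have h5 : f (1, t) = c (b t) := by simpa [hfdef] using hedge1 t
    simp [hBdef, hg1def, h4, h5, hgdef, smul_eq_mul, mul_comm]
  -- antiderivative G of g
  have hgcont : Continuous g := by
    exact (hω.continuous.comp hc.continuous).clm_apply (hc.continuous_deriv (by simp))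
  set G : ℝ → ℝ := fun x => ∫ u in (0:ℝ)..x, g u with hGdef
  have hG : ∀ x : ℝ, HasDerivAt G (g x) x := fun x =>
    (hgcont.integral_hasStrictDerivAt 0 x).hasDerivAt
  have hGmono : StrictMono G := by
    apply strictMono_of_deriv_pos
    intro x
    rw [(hG x).deriv]
    exact htransverse x
  -- G ∘ a - G ∘ b is constant and equals 0 at t = 0
  have habt : ∀ t : ℝ, a t = b t := by
    have hHa : ∀ t, HasDerivAt (fun t' => G (a t')) (deriv a t * g (a t)) t := by
      intro t
      have := HasDerivAt.scomp t (hG (a t)) (had t).hasDerivAt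
      simpa [smul_eq_mul, Function.comp_def] using this
    have hHb : ∀ t, HasDerivAt (fun t' => G (b t')) (deriv b t * g (b t)) t := by
      intro t
      have := HasDerivAt.scomp t (hG (b t)) (hbd t).hasDerivAt
      simpa [smul_eq_mul, Function.comp_def] using this
    have hHd : Differentiable ℝ (fun t => G (a t) - G (b t)) := fun t =>
      ((hHa t).sub (hHb t)).differentiableAt
    have hH' : ∀ t, deriv (fun t => G (a t) - G (b t)) t = 0 := by
      intro t
      rw [((hHa t).fun_sub (hHb t)).deriv]
      have e0 := hedgeB0 t
      have e1 := hedgeB1 t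
      have := hBconst t
      linarith
    intro t
    have := is_const_of_deriv_eq_zero hHd hH' t 0
    have h0 : G (a 0) - G (b 0) = 0 := by rw [hloop]; ring
    have hGt : G (a t) = G (b t) := by
      have : G (a t) - G (b t) = G (a 0) - G (b 0) := this
      linarith
    exact hGmono.injective hGt
  refine ⟨habt, ?_⟩
  rw [hedge0 1, hedge1 1, habt 1]

end
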